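/- arXiv:2407.15669 — 9 statements merged into one kernel-verified Lean document; each statement's English description precedes it below -/
import Mathlib

section
/- Let $\overline{U}$ satisfy $y+\overline{U}(y)+\overline{U}(y)^3=0$. Then for all $y\in\mathbb{R}$, $-\dfrac{1}{1+\frac{3y^2}{(3y^2+1)^{2/3}}} \le \overline{U}'(y) \le 0$. -/
open Filter Real

/-- Pointwise bounds for the derivative of the Burgers profile:
`-(1 + 3y²/(3y²+1)^{2/3})⁻¹ ≤ Ubar'(y) ≤ 0` for all `y`. -/
theorem burgers_profile_deriv_bounds (U : ℝ → ℝ)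
    (hU : ∀ y : ℝ, y + U y + (U y) ^ 3 = 0) :
    ∀ y : ℝ,
      -(1 / (1 + 3 * y ^ 2 / (3 * y ^ 2 + 1) ^ ((2 : ℝ) / 3))) ≤ deriv U y ∧
      deriv U y ≤ 0 := by
  intro y
  set f : ℝ → ℝ := fun u => u + u ^ 3 with hf
  have hmono : StrictMono f := by
    have h3 : StrictMono fun u : ℝ => u ^ 3 := Odd.strictMono_pow (⟨1, by norm_num⟩ : Odd 3)
    exact fun a b hab => add_lt_add hab (h3 hab)
  have hcont : Continuous f := by
    simp only [hf]; continuity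
  have htop : Tendsto f atTop atTop := by
    apply tendsto_atTop_mono' atTop _ tendsto_id
    filter_upwards [eventually_ge_atTop (0:ℝ)] with x hx
    simp only [f, id]; nlinarith [sq_nonneg x, mul_nonneg hx (sq_nonneg x)]
  have hbot : Tendsto f atBot atBot := by
    apply tendsto_atBot_mono' atBot _ tendsto_id
    filter_upwards [eventually_le_atBot (0:ℝ)] with x hx
    simp only [f, id]; nlinarith [sq_nonneg x, mul_nonpos_of_nonpos_of_nonneg hx (sq_nonneg x)]
  have hsurj : Function.Surjective f := Continuous.surjective hcont htop hbot
  set e := StrictMono.orderIsoOfSurjective f hmono hsurj with he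
  have hfU : ∀ z, f (U z) = -z := by
    intro z; have := hU z; simp only [f]; linarith
  have hUe : ∀ z, U z = e.symm (-z) := by
    intro z
    apply hmono.injective
    rw [hfU z]
    exact (e.apply_symm_apply (-z)).symm
  set u := U y with hu
  have hyv : y = -(u + u ^ 3) := by have := hU y; simp only [hu]; linarith
  have hcg : ContinuousAt (fun x => U (-x)) (-y) := by
    have heq : (fun x => U (-x)) = fun x => e.symm x := by
      funext x; rw [hUe]; simp
    rw [heq]
    exact (OrderIso.continuous e.symm).continuousAt
  have hfd : HasDerivAt f (1 + 3 * u ^ 2) ((fun x => U (-x)) (-y)) := by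
    have h1 : HasDerivAt f (1 + 3 * u ^ 2) u := by
      have h2 := (hasDerivAt_id u).add (hasDerivAt_pow 3 u)
      norm_num at h2
      exact h2
    simpa using h1
  have hg : HasDerivAt (fun x => U (-x)) (1 + 3 * u ^ 2)⁻¹ (-y) := by
    apply HasDerivAt.of_local_left_inverse hcg hfd (by positivity)
    exact Eventually.of_forall fun x => by rw [hfU]; ring
  have hDU : HasDerivAt U (-(1 + 3 * u ^ 2)⁻¹) y := by
    have h2 := hg.comp y (hasDerivAt_neg y)
    have heq : ((fun x => U (-x)) ∘ fun x => -x) = U := by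
      funext x; simp
    rw [heq] at h2
    convert h2 using 1
    · rfl
    · rfl
    ring
  have hb : (0:ℝ) < 1 + u ^ 2 := by positivity
  have hA : (0:ℝ) < (3 * y ^ 2 + 1) ^ ((2:ℝ)/3) := Real.rpow_pos_of_pos (by positivity) _
  have hcube : (1 + u ^ 2) ^ (3:ℕ) ≤ 3 * y ^ 2 + 1 := by
    rw [hyv]
    nlinarith [sq_nonneg (u ^ 2), sq_nonneg (u ^ 3)]
  have hkey : (1 + u ^ 2) ^ 2 ≤ (3 * y ^ 2 + 1) ^ ((2:ℝ)/3) := by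
    have h1 : ((1 + u ^ 2) ^ 2 : ℝ) = ((1 + u ^ 2) ^ (3:ℕ) : ℝ) ^ ((2:ℝ)/3) := by
      rw [← Real.rpow_natCast (1 + u ^ 2) 3, ← Real.rpow_mul hb.le,
        ← Real.rpow_natCast (1 + u ^ 2) 2]
      norm_num
    rw [h1]
    exact Real.rpow_le_rpow (by positivity) hcube (by norm_num)
  have hy2 : y ^ 2 ≤ u ^ 2 * (3 * y ^ 2 + 1) ^ ((2:ℝ)/3) := by
    calc y ^ 2 = u ^ 2 * (1 + u ^ 2) ^ 2 := by rw [hyv]; ring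
      _ ≤ u ^ 2 * (3 * y ^ 2 + 1) ^ ((2:ℝ)/3) :=
        mul_le_mul_of_nonneg_left hkey (sq_nonneg u)
  have h1 : (0:ℝ) < 1 + 3 * u ^ 2 := by positivity
  have h2 : (0:ℝ) < 1 + 3 * y ^ 2 / (3 * y ^ 2 + 1) ^ ((2:ℝ)/3) := by positivity
  rw [hDU.deriv]
  constructor
  · apply neg_le_neg
    rw [one_div]
    apply inv_anti₀ h2
    have h3 : 3 * y ^ 2 / (3 * y ^ 2 + 1) ^ ((2:ℝ)/3) ≤ 3 * u ^ 2 := by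
      rw [div_le_iff₀ hA]
      nlinarith
    linarith
  · exact neg_nonpos.mpr (inv_nonneg.mpr h1.le)
end

section
/- Let $\overline{U}$ satisfy $y+\overline{U}(y)+\overline{U}(y)^3=0$. Then there exists a constant $C>0$ such that for all $y\in\mathbb{R}$: $|\overline{U}'(y)| \le C(1+y^2)^{-1/3}$ and $|\overline{U}''(y)| \le C(1+y^2)^{-5/6}$. -/
/-- Decay rates for the first and second derivatives of the Burgers profile:
`|Ubar'(y)| ≤ C (1+y²)^{-1/3}` and `|Ubar''(y)| ≤ C (1+y²)^{-5/6}`. -/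
theorem burgers_profile_deriv_decay (U : ℝ → ℝ)
    (hU : ∀ y : ℝ, y + U y + (U y) ^ 3 = 0) :
    ∃ C : ℝ, 0 < C ∧ ∀ y : ℝ,
      |deriv U y| ≤ C * (1 + y ^ 2) ^ (-(1 : ℝ) / 3) ∧
      |iteratedDeriv 2 U y| ≤ C * (1 + y ^ 2) ^ (-(5 : ℝ) / 6) := by
  -- the strictly monotone map φ x = x + x³
  set φ : ℝ → ℝ := fun x => x + x ^ 3 with hφ
  have hmono : StrictMono φ :=
    fun a b hab => by dsimp [φ]; nlinarith [sq_nonneg (a + b), sq_nonneg (a - b), sq_nonneg a, sq_nonneg b]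
  have hsurj : Function.Surjective φ := fun y => ⟨U (-y), by have := hU (-y); dsimp [φ]; linarith⟩
  set e := StrictMono.orderIsoOfSurjective φ hmono hsurj with he
  have hUe : ∀ y : ℝ, U y = e.symm (-y) := by
    intro y
    have h1 : φ (U y) = -y := by have := hU y; dsimp [φ]; linarith
    have := StrictMono.orderIsoOfSurjective_symm_apply_self φ hmono hsurj (U y)
    rw [h1] at this
    exact this.symm
  have hcont : Continuous U := by
    have : Continuous fun y : ℝ => e.symm (-y) := e.symm.continuous.comp continuous_neg
    exact this.congr fun y => (hUe y).symm
  -- derivative of U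
  have hder : ∀ y : ℝ, HasDerivAt U (-(1 + 3 * (U y) ^ 2))⁻¹ y := by
    intro y
    have hf : HasDerivAt (fun x : ℝ => -(x + x ^ 3)) (-(1 + 3 * (U y) ^ 2)) (U y) := by
      have h0 := ((hasDerivAt_id (U y)).add (hasDerivAt_pow 3 (U y))).neg
      have heq : -(1 + 3 * (U y) ^ 2) = -(1 + (3:ℕ) * U y ^ (3-1)) := by push_cast; ring
      rw [heq]; exact h0
    have hne : -(1 + 3 * (U y) ^ 2) ≠ 0 := by nlinarith [sq_nonneg (U y)]
    exact HasDerivAt.of_local_left_inverse hcont.continuousAt hf hne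
      (Filter.Eventually.of_forall fun z => show -(U z + U z ^ 3) = z by have := hU z; linarith)
  have hderivU : deriv U = fun y => (-(1 + 3 * (U y) ^ 2))⁻¹ :=
    funext fun y => (hder y).deriv
  -- second derivative
  have hder2 : ∀ y : ℝ, HasDerivAt (deriv U)
      (-6 * U y / (1 + 3 * (U y) ^ 2) ^ 3) y := by
    intro y
    have hne : -(1 + 3 * (U y) ^ 2) ≠ 0 := by nlinarith [sq_nonneg (U y)]
    have hg : HasDerivAt (fun z => -(1 + 3 * (U z) ^ 2))
        (-(3 * (2 * U y ^ 1 * (-(1 + 3 * (U y) ^ 2))⁻¹))) y := by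
      exact (((hasDerivAt_const y (1:ℝ)).add (((hder y).pow 2).const_mul 3)).neg).congr_deriv
        (by push_cast; ring)
    have := hg.inv hne
    rw [hderivU]
    refine this.congr_deriv ?_
    generalize (1 + 3 * U y ^ 2 : ℝ) = D
    ring
  have hiter : ∀ y : ℝ, iteratedDeriv 2 U y = -6 * U y / (1 + 3 * (U y) ^ 2) ^ 3 := by
    intro y
    rw [iteratedDeriv_succ, iteratedDeriv_one]
    exact (hder2 y).deriv
  refine ⟨6, by norm_num, fun y => ?_⟩
  set u := U y with hu
  have hAB : 1 + y ^ 2 ≤ (1 + u ^ 2) ^ 3 := by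
    have hy : y = -(u + u ^ 3) := by have := hU y; linarith
    rw [hy]; nlinarith [sq_nonneg u, sq_nonneg (u ^ 2), sq_nonneg (u ^ 3)]
  have hApos : (0:ℝ) < 1 + y ^ 2 := by positivity
  have hBpos : (0:ℝ) < 1 + u ^ 2 := by positivity
  have hA3 : (1 + y ^ 2) ^ ((1:ℝ)/3) ≤ 1 + u ^ 2 := by
    have h1 : (1 + y ^ 2) ^ ((1:ℝ)/3) ≤ ((1 + u ^ 2) ^ 3) ^ ((1:ℝ)/3) :=
      Real.rpow_le_rpow hApos.le hAB (by norm_num)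
    calc (1 + y ^ 2) ^ ((1:ℝ)/3) ≤ ((1 + u ^ 2) ^ 3) ^ ((1:ℝ)/3) := h1
      _ = 1 + u ^ 2 := by
          rw [← Real.rpow_natCast (1 + u ^ 2) 3, ← Real.rpow_mul hBpos.le]
          norm_num
  have hA3pos : (0:ℝ) < (1 + y ^ 2) ^ ((1:ℝ)/3) := Real.rpow_pos_of_pos hApos _
  have hDpos : (0:ℝ) < 1 + 3 * u ^ 2 := by positivity
  constructor
  · -- first derivative bound
    rw [hderivU]
    have habs : |(-(1 + 3 * u ^ 2))⁻¹| = (1 + 3 * u ^ 2)⁻¹ := by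
      rw [abs_inv, abs_neg, abs_of_pos hDpos]
    rw [habs, show (-(1:ℝ))/3 = -((1:ℝ)/3) by norm_num, Real.rpow_neg hApos.le]
    have h1 : (1 + 3 * u ^ 2)⁻¹ ≤ ((1 + y ^ 2) ^ ((1:ℝ)/3))⁻¹ := by
      apply inv_anti₀ hA3pos
      nlinarith [sq_nonneg u]
    calc (1 + 3 * u ^ 2)⁻¹ ≤ ((1 + y ^ 2) ^ ((1:ℝ)/3))⁻¹ := h1
      _ ≤ 6 * ((1 + y ^ 2) ^ ((1:ℝ)/3))⁻¹ := by
          nlinarith [inv_pos.mpr hA3pos]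
  · -- second derivative bound
    rw [hiter y, ← hu]
    have habs : |(-6 * u / (1 + 3 * u ^ 2) ^ 3)| = 6 * |u| / (1 + 3 * u ^ 2) ^ 3 := by
      rw [abs_div, abs_of_pos (by positivity : (0:ℝ) < (1 + 3 * u ^ 2) ^ 3)]
      congr 1
      rw [show (-6:ℝ) * u = -(6 * u) by ring, abs_neg, abs_mul, abs_of_pos (by norm_num : (0:ℝ) < 6)]
    rw [habs, show (-(5:ℝ))/6 = -((5:ℝ)/6) by norm_num, Real.rpow_neg hApos.le]
    -- key: |u| * (1+y²)^(5/6) ≤ (1+3u²)³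
    have hub : |u| ≤ (1 + u ^ 2) ^ ((1:ℝ)/2) := by
      rw [← Real.sqrt_eq_rpow]
      rw [show |u| = Real.sqrt (u ^ 2) from (Real.sqrt_sq_eq_abs u).symm]
      exact Real.sqrt_le_sqrt (by nlinarith)
    have hA56 : (1 + y ^ 2) ^ ((5:ℝ)/6) ≤ (1 + u ^ 2) ^ ((5:ℝ)/2) := by
      calc (1 + y ^ 2) ^ ((5:ℝ)/6) = ((1 + y ^ 2) ^ ((1:ℝ)/3)) ^ ((5:ℝ)/2) := by
            rw [← Real.rpow_mul hApos.le]; norm_num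
        _ ≤ (1 + u ^ 2) ^ ((5:ℝ)/2) := Real.rpow_le_rpow hA3pos.le hA3 (by norm_num)
    have hkey : |u| * (1 + y ^ 2) ^ ((5:ℝ)/6) ≤ (1 + 3 * u ^ 2) ^ 3 := by
      have h1 : |u| * (1 + y ^ 2) ^ ((5:ℝ)/6) ≤ (1 + u ^ 2) ^ ((1:ℝ)/2) * (1 + u ^ 2) ^ ((5:ℝ)/2) := by
        apply mul_le_mul hub hA56 (Real.rpow_nonneg hApos.le _) (Real.rpow_nonneg hBpos.le _)
      have h2 : (1 + u ^ 2) ^ ((1:ℝ)/2) * (1 + u ^ 2) ^ ((5:ℝ)/2) = (1 + u ^ 2) ^ (3:ℕ) := by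
        rw [← Real.rpow_add hBpos, ← Real.rpow_natCast (1 + u ^ 2) 3]
        norm_num
      have h3 : (1 + u ^ 2) ^ (3:ℕ) ≤ (1 + 3 * u ^ 2) ^ 3 := by
        apply pow_le_pow_left₀ hBpos.le (by nlinarith) 3
      calc |u| * (1 + y ^ 2) ^ ((5:ℝ)/6) ≤ (1 + u ^ 2) ^ ((1:ℝ)/2) * (1 + u ^ 2) ^ ((5:ℝ)/2) := h1
        _ = (1 + u ^ 2) ^ (3:ℕ) := h2
        _ ≤ (1 + 3 * u ^ 2) ^ 3 := h3
    have hA56pos : (0:ℝ) < (1 + y ^ 2) ^ ((5:ℝ)/6) := Real.rpow_pos_of_pos hApos _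
    rw [div_le_iff₀ (show (0:ℝ) < (1 + 3 * u ^ 2) ^ 3 by positivity)]
    have h2 : |u| ≤ (1 + 3 * u ^ 2) ^ 3 / (1 + y ^ 2) ^ ((5:ℝ)/6) :=
      (le_div_iff₀ hA56pos).mpr hkey
    calc 6 * |u| ≤ 6 * ((1 + 3 * u ^ 2) ^ 3 / (1 + y ^ 2) ^ ((5:ℝ)/6)) := by linarith
      _ = 6 * ((1 + y ^ 2) ^ ((5:ℝ)/6))⁻¹ * (1 + 3 * u ^ 2) ^ 3 := by ring
end

section
/- Let $\overline{U}$ satisfy $y+\overline{U}(y)+\overline{U}(y)^3=0$. Then for all $y\in\mathbb{R}$ with $y\ne 0$: $\dfrac{y^2}{5(1+y^2)}+\dfrac{16y^2}{5(1+8y^2)} \le 1+2\overline{U}'(y)+\dfrac{2}{1+y^2}\Bigl(\dfrac{3}{2}+\dfrac{\overline{U}(y)}{y}\Bigr)$. -/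
private lemma burgers_inv (U : ℝ → ℝ) (hU : ∀ y : ℝ, y + U y + (U y) ^ 3 = 0) :
    ∀ y : ℝ, -(U y + (U y) ^ 3) = y := by
  intro y; have := hU y; linarith

private lemma burgers_f_strictAnti : StrictAnti (fun u : ℝ => -(u + u ^ 3)) := by
  intro a b hab
  simp only
  nlinarith [sq_nonneg (a + b), sq_nonneg a, sq_nonneg b, sq_nonneg (a - b)]

private lemma burgers_U_antitone (U : ℝ → ℝ) (hU : ∀ y : ℝ, y + U y + (U y) ^ 3 = 0) :
    StrictAnti U := by
  intro a b hab
  rcases lt_trichotomy (U b) (U a) with h | h | h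
  · exact h
  · exfalso
    have ha := burgers_inv U hU a
    have hb := burgers_inv U hU b
    rw [h] at hb
    rw [ha] at hb
    linarith
  · exfalso
    have := burgers_f_strictAnti h
    simp only at this
    rw [burgers_inv U hU a, burgers_inv U hU b] at this
    linarith

private lemma burgers_U_surj (U : ℝ → ℝ) (hU : ∀ y : ℝ, y + U y + (U y) ^ 3 = 0) :
    Function.Surjective U := by
  intro u
  refine ⟨-(u + u ^ 3), ?_⟩
  have h := burgers_inv U hU (-(u + u ^ 3))
  exact burgers_f_strictAnti.injective h

private lemma burgers_U_continuous (U : ℝ → ℝ) (hU : ∀ y : ℝ, y + U y + (U y) ^ 3 = 0) :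
    Continuous U := by
  have hmono : Monotone (fun y => U (-y)) := by
    intro a b hab
    rcases eq_or_lt_of_le hab with h | h
    · rw [h]
    · exact le_of_lt ((burgers_U_antitone U hU) (neg_lt_neg h))
  have hsurj : Function.Surjective (fun y => U (-y)) := by
    intro u
    obtain ⟨y, hy⟩ := burgers_U_surj U hU u
    exact ⟨-y, by simpa using hy⟩
  have hc : Continuous (fun y => U (-y)) := hmono.continuous_of_surjective hsurj
  have h2 : Continuous fun y => U (-(-y)) := hc.comp continuous_neg
  simpa using h2

private lemma burgers_deriv (U : ℝ → ℝ) (hU : ∀ y : ℝ, y + U y + (U y) ^ 3 = 0)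
    (y : ℝ) : deriv U y = (-(1 + 3 * (U y) ^ 2))⁻¹ := by
  have hf : HasDerivAt (fun u : ℝ => -(u + u ^ 3)) (-(1 + 3 * (U y) ^ 2)) (U y) := by
    have : HasDerivAt (fun u : ℝ => -(u + u ^ 3)) (-(1 + 3 * (U y) ^ 2 * 1)) (U y) := by
      exact ((hasDerivAt_id (U y)).add ((hasDerivAt_id (U y)).pow 3)).neg
    simpa using this
  have h := HasDerivAt.of_local_left_inverse
    ((burgers_U_continuous U hU).continuousAt)
    hf (by nlinarith [sq_nonneg (U y)])
    (Filter.Eventually.of_forall (burgers_inv U hU))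
  exact h.deriv

/-- Damping inequality for the Burgers profile: for `y ≠ 0`,
`y²/(5(1+y²)) + 16y²/(5(1+8y²)) ≤ 1 + 2 Ubar' + (2/(1+y²))(3/2 + Ubar/y)`. -/
theorem burgers_profile_damping_ineq (U : ℝ → ℝ)
    (hU : ∀ y : ℝ, y + U y + (U y) ^ 3 = 0) :
    ∀ y : ℝ, y ≠ 0 →
      y ^ 2 / (5 * (1 + y ^ 2)) + 16 * y ^ 2 / (5 * (1 + 8 * y ^ 2)) ≤
        1 + 2 * deriv U y + 2 / (1 + y ^ 2) * (3 / 2 + U y / y) := by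
  intro y hy
  set u := U y with hu
  have hyu : y = -(u + u ^ 3) := (burgers_inv U hU y).symm
  have hune : u ≠ 0 := by
    intro h; apply hy; rw [hyu, h]; ring
  rw [burgers_deriv U hU y, ← hu]
  have h1 : (0:ℝ) < 1 + y ^ 2 := by positivity
  have h2 : (0:ℝ) < 1 + 8 * y ^ 2 := by positivity
  have h3 : (0:ℝ) < 1 + 3 * u ^ 2 := by positivity
  have h4 : (0:ℝ) < 1 + u ^ 2 := by positivity
  rw [← sub_nonneg]
  have key : 1 + 2 * (-(1 + 3 * u ^ 2))⁻¹ + 2 / (1 + y ^ 2) * (3 / 2 + u / y) -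
      (y ^ 2 / (5 * (1 + y ^ 2)) + 16 * y ^ 2 / (5 * (1 + 8 * y ^ 2))) =
      (18 * u ^ 2 + 214 * u ^ 4 + 674 * u ^ 6 + 750 * u ^ 8 + 284 * u ^ 10 +
        160 * u ^ 12 + 176 * u ^ 14 + 48 * u ^ 16) /
      (5 * (1 + y ^ 2) * (1 + 8 * y ^ 2) * (1 + 3 * u ^ 2) * (1 + u ^ 2)) := by
    rw [hyu]
    have hyne : -(u + u ^ 3) ≠ 0 := by rw [← hyu]; exact hy
    have h3ne : -(1 + 3 * u ^ 2) ≠ 0 := by nlinarith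
    have ha : (1 + (-(u + u ^ 3)) ^ 2) ≠ 0 := by positivity
    have hb : (1 + 8 * (-(u + u ^ 3)) ^ 2) ≠ 0 := by positivity
    have n1 : (-(3 * u ^ 2) + -1 : ℝ) ≠ 0 := by nlinarith
    have n2 : (-u ^ 3 + -u : ℝ) ≠ 0 := by intro h; exact hyne (by linarith)
    have h4ne : (1 + u ^ 2 : ℝ) ≠ 0 := by positivity
    field_simp [hyne, h3ne, ha, hb, n1, n2, h4ne]
    ring
  rw [key]
  positivity
end

section
/- Let $\overline{U}$ satisfy $y+\overline{U}(y)+\overline{U}(y)^3=0$. There exists a constant $\lambda>1$ such that for all $y\in\mathbb{R}$, $\lambda\,|\overline{U}''(y)|\,\dfrac{1+y^2}{y^2}\int_0^{|y|}\dfrac{(y')^2}{1+(y')^2}\,dy' \le \dfrac{3y^2}{1+8y^2}+\dfrac{y^2}{30(1+y^2)}$. -/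
open intervalIntegral

private lemma integrand_bound (t : ℝ) : t ^ 2 / (1 + t ^ 2) ≤ (9 * t ^ 2 + t ^ 4) / (3 + t ^ 2) ^ 2 := by
  rw [div_le_div_iff₀ (by positivity) (by positivity)]
  nlinarith [sq_nonneg t, sq_nonneg (t^2)]

private lemma integral_bound (r : ℝ) (hr : 0 ≤ r) :
    (∫ t in (0:ℝ)..r, t ^ 2 / (1 + t ^ 2)) ≤ r ^ 3 / (3 + r ^ 2) := by
  have hF : ∀ x : ℝ, HasDerivAt (fun x : ℝ => x ^ 3 / (3 + x ^ 2))
      ((9 * x ^ 2 + x ^ 4) / (3 + x ^ 2) ^ 2) x := by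
    intro x
    have h1 : HasDerivAt (fun x : ℝ => x ^ 3) (3 * x ^ 2) x := by
      simpa using hasDerivAt_pow 3 x
    have h2 : HasDerivAt (fun x : ℝ => 3 + x ^ 2) (2 * x) x := by
      simpa using (hasDerivAt_pow 2 x).const_add 3
    have : HasDerivAt (fun x : ℝ => x ^ 3 / (3 + x ^ 2)) _ x := h1.div h2 (by positivity)
    convert this using 1
    ring
  have hferint : IntervalIntegrable (fun t : ℝ => t ^ 2 / (1 + t ^ 2)) MeasureTheory.volume 0 r := by
    apply Continuous.intervalIntegrable
    exact continuous_pow 2 |>.div (by continuity) (fun x => by positivity)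
  have hgerint : IntervalIntegrable (fun t : ℝ => (9 * t ^ 2 + t ^ 4) / (3 + t ^ 2) ^ 2) MeasureTheory.volume 0 r := by
    apply Continuous.intervalIntegrable
    apply Continuous.div (by continuity) (by continuity) (fun x => by positivity)
  calc (∫ t in (0:ℝ)..r, t ^ 2 / (1 + t ^ 2))
      ≤ ∫ t in (0:ℝ)..r, (9 * t ^ 2 + t ^ 4) / (3 + t ^ 2) ^ 2 :=
        integral_mono_on hr hferint hgerint (fun t _ => integrand_bound t)
    _ = r ^ 3 / (3 + r ^ 2) - 0 ^ 3 / (3 + (0:ℝ) ^ 2) :=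
        integral_eq_sub_of_hasDerivAt (fun x _ => hF x) hgerint
    _ = r ^ 3 / (3 + r ^ 2) := by norm_num

private lemma final_poly (s : ℝ) (hs : 0 ≤ s) :
    15/2 * (s * (1 + s)) * (1 + s * (1 + s) ^ 2) / ((1 + 3 * s) ^ 3 * (3 + s * (1 + s) ^ 2)) ≤
      3 * (s * (1 + s) ^ 2) / (1 + 8 * (s * (1 + s) ^ 2)) +
        s * (1 + s) ^ 2 / (30 * (1 + s * (1 + s) ^ 2)) := by
  have h1 : (0:ℝ) < 1 + 8 * (s * (1 + s) ^ 2) := by nlinarith [sq_nonneg (1+s)]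
  have h2 : (0:ℝ) < 30 * (1 + s * (1 + s) ^ 2) := by nlinarith [sq_nonneg (1+s)]
  have h3 : (0:ℝ) < (1 + 3 * s) ^ 3 * (3 + s * (1 + s) ^ 2) := by positivity
  rw [div_add_div _ _ h1.ne' h2.ne', div_le_div_iff₀ h3 (by positivity)]
  nlinarith [hs, pow_nonneg hs 2, pow_nonneg hs 3, pow_nonneg hs 4, pow_nonneg hs 5,
    pow_nonneg hs 6, pow_nonneg hs 7, pow_nonneg hs 8, pow_nonneg hs 9, pow_nonneg hs 10,
    pow_nonneg hs 11, pow_nonneg hs 12]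

/-- Kernel bound for the Burgers profile: there is `λ > 1` such that for all `y`,
`λ |Ubar''(y)| (1+y²)/y² ∫₀^{|y|} y'²/(1+y'²) dy' ≤ 3y²/(1+8y²) + y²/(30(1+y²))`.
(At `y = 0` the left-hand side is interpreted as `0`, which Lean's division-by-zero
convention yields automatically.) -/
theorem burgers_profile_kernel_bound (U : ℝ → ℝ)
    (hU : ∀ y : ℝ, y + U y + (U y) ^ 3 = 0) :
    ∃ lam : ℝ, 1 < lam ∧ ∀ y : ℝ,
      lam * |iteratedDeriv 2 U y| * ((1 + y ^ 2) / y ^ 2) *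
          (∫ t in (0 : ℝ)..|y|, t ^ 2 / (1 + t ^ 2)) ≤
        3 * y ^ 2 / (1 + 8 * y ^ 2) + y ^ 2 / (30 * (1 + y ^ 2)) := by
  set f : ℝ → ℝ := fun x => x + x ^ 3 with hf
  have hmono : StrictMono f := by
    intro a b h
    simp only [hf]
    nlinarith [sq_nonneg (a + b), sq_nonneg (a - b), sq_nonneg a, sq_nonneg b]
  have hfU : ∀ y, f (U y) = -y := by
    intro y
    have := hU y
    simp only [hf]
    linarith
  have hRI : Function.RightInverse (fun y => U (-y)) f := by
    intro y
    simpa using hfU (-y)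
  have hUcont : Continuous U := by
    have h1 : Continuous ((hmono.orderIsoOfRightInverse f (fun y => U (-y)) hRI).symm) :=
      OrderIso.continuous _
    have h2 : Continuous fun y : ℝ => U (-y) := h1
    have h3 := h2.comp continuous_neg
    simpa [Function.comp_def] using h3
  have hderivU : ∀ y : ℝ, HasDerivAt U (-(1 + 3 * (U y) ^ 2))⁻¹ y := by
    intro y
    have hne : -(1 + 3 * (U y) ^ 2) ≠ 0 := by nlinarith [sq_nonneg (U y)]
    have hfd : HasDerivAt (fun x : ℝ => -f x) (-(1 + 3 * (U y) ^ 2)) (U y) := by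
      have h1 : HasDerivAt (fun x : ℝ => x + x ^ 3) (1 + 3 * (U y) ^ 2) (U y) := by
        have h0 : HasDerivAt (fun x : ℝ => x + x ^ 3) _ (U y) :=
          (hasDerivAt_id' (U y)).add (hasDerivAt_pow 3 (U y))
        simpa using h0
      exact h1.neg
    exact HasDerivAt.of_local_left_inverse hUcont.continuousAt hfd hne
      (Filter.Eventually.of_forall (fun z => by simp [hfU z]))
  have hderiv_eq : deriv U = fun y => (-(1 + 3 * (U y) ^ 2))⁻¹ :=
    funext fun y => (hderivU y).deriv
  have hU2 : ∀ y : ℝ, iteratedDeriv 2 U y = -(6 * U y) / (1 + 3 * (U y) ^ 2) ^ 3 := by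
    intro y
    have hne : -(1 + 3 * (U y) ^ 2) ≠ 0 := by nlinarith [sq_nonneg (U y)]
    have hne' : (1 + 3 * (U y) ^ 2) ≠ 0 := by positivity
    have hcomp : HasDerivAt (fun z => (-(1 + 3 * (U z) ^ 2))⁻¹)
        (-(6 * U y) / (1 + 3 * (U y) ^ 2) ^ 3) y := by
      have hb : HasDerivAt (fun z : ℝ => -(1 + 3 * (U z) ^ 2))
          (-(3 * (2 * U y * (-(1 + 3 * (U y) ^ 2))⁻¹))) y := by
        have h4 := ((hderivU y).pow 2).const_mul (3:ℝ)
        have h5 : HasDerivAt (fun z : ℝ => -(1 + 3 * (U z) ^ 2)) _ y := (h4.const_add 1).neg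
        convert h5 using 1
        ring
      have h6 := hb.inv hne
      have hval : - -(3 * (2 * U y * (-(1 + 3 * U y ^ 2))⁻¹)) / (-(1 + 3 * U y ^ 2)) ^ 2
          = -(6 * U y) / (1 + 3 * U y ^ 2) ^ 3 := by
        rw [inv_neg, neg_neg, neg_sq]
        rw [div_eq_div_iff (by positivity) (by positivity)]
        have hA : (1 + 3 * U y ^ 2) ≠ 0 := hne'
        field_simp
        ring
      exact hval ▸ h6
    rw [iteratedDeriv_succ, iteratedDeriv_one, hderiv_eq]
    exact hcomp.deriv
  refine ⟨5/4, by norm_num, fun y => ?_⟩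
  have hyu : y = -(U y + (U y) ^ 3) := by have := hU y; linarith
  set u := U y with hu
  have habs2 : |iteratedDeriv 2 U y| = 6 * |u| / (1 + 3 * u ^ 2) ^ 3 := by
    rw [hU2 y, abs_div, abs_neg, abs_of_pos (by positivity : (0:ℝ) < (1 + 3 * u ^ 2) ^ 3)]
    congr 1
    rw [abs_mul, abs_of_pos (by norm_num : (0:ℝ) < (6:ℝ))]
  have hIub := integral_bound |y| (abs_nonneg y)
  rw [sq_abs] at hIub
  have hInn : 0 ≤ ∫ t in (0:ℝ)..|y|, t ^ 2 / (1 + t ^ 2) := by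
    apply integral_nonneg (abs_nonneg y)
    intro t _
    positivity
  by_cases hy : y = 0
  · subst hy
    simp
  · have hy2 : (0:ℝ) < y ^ 2 := by positivity
    have hyabs : |y| = |u| * (1 + u ^ 2) := by
      rw [hyu, abs_neg]
      have h7 : u + u ^ 3 = u * (1 + u ^ 2) := by ring
      rw [h7, abs_mul, abs_of_pos (by positivity : (0:ℝ) < 1 + u ^ 2)]
    have hy2eq : y ^ 2 = u ^ 2 * (1 + u ^ 2) ^ 2 :=
      calc y ^ 2 = |y| ^ 2 := (sq_abs y).symm
        _ = (|u| * (1 + u ^ 2)) ^ 2 := by rw [hyabs]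
        _ = u ^ 2 * (1 + u ^ 2) ^ 2 := by rw [mul_pow, sq_abs]
    have hfac : (0:ℝ) ≤ 5/4 * (6 * |u| / (1 + 3 * u ^ 2) ^ 3) * ((1 + y ^ 2) / y ^ 2) := by
      positivity
    have hstep1 : 5/4 * |iteratedDeriv 2 U y| * ((1 + y ^ 2) / y ^ 2) *
          (∫ t in (0:ℝ)..|y|, t ^ 2 / (1 + t ^ 2)) ≤
        5/4 * (6 * |u| / (1 + 3 * u ^ 2) ^ 3) * ((1 + y ^ 2) / y ^ 2) *
          (|y| ^ 3 / (3 + y ^ 2)) := by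
      rw [habs2]
      exact mul_le_mul_of_nonneg_left hIub hfac
    refine hstep1.trans ?_
    have huy : |u| * |y| = u ^ 2 * (1 + u ^ 2) := by
      rw [hyabs]
      calc |u| * (|u| * (1 + u ^ 2)) = |u| ^ 2 * (1 + u ^ 2) := by ring
        _ = u ^ 2 * (1 + u ^ 2) := by rw [sq_abs]
    have habs3 : |y| ^ 3 = |y| * y ^ 2 := by rw [← sq_abs y]; ring
    have hlhs_eq : 5/4 * (6 * |u| / (1 + 3 * u ^ 2) ^ 3) * ((1 + y ^ 2) / y ^ 2) *
          (|y| ^ 3 / (3 + y ^ 2)) =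
        15/2 * (u ^ 2 * (1 + u ^ 2)) * (1 + y ^ 2) /
          ((1 + 3 * u ^ 2) ^ 3 * (3 + y ^ 2)) := by
      rw [habs3, ← huy]
      have hy2ne : y ^ 2 ≠ 0 := hy2.ne'
      field_simp
      ring
    rw [hlhs_eq]
    set s := u ^ 2 with hs
    have hs0 : (0:ℝ) ≤ s := sq_nonneg u
    have hY : y ^ 2 = s * (1 + s) ^ 2 := by rw [hy2eq]
    rw [hY]
    exact final_poly s hs0
end

section
/- Let $\overline{U}$ satisfy $y+\overline{U}(y)+\overline{U}(y)^3=0$. Then $1+\overline{U}'(y) \ge \dfrac{y^2}{3(1+y^2)}$ for all $y\in\mathbb{R}$. -/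
/-- Coercivity of `1 + Ubar'`: `1 + Ubar'(y) ≥ y²/(3(1+y²))` for all `y`. -/
theorem burgers_profile_one_add_deriv (U : ℝ → ℝ)
    (hU : ∀ y : ℝ, y + U y + (U y) ^ 3 = 0) :
    ∀ y : ℝ, y ^ 2 / (3 * (1 + y ^ 2)) ≤ 1 + deriv U y := by
  -- the forward map
  have hfmono : StrictMono (fun u : ℝ => u + u ^ 3) := by
    intro a b hab
    simp only
    nlinarith [sq_nonneg (a + b), sq_nonneg a, sq_nonneg b, sq_nonneg (a - b)]
  have hfcont : Continuous (fun u : ℝ => u + u ^ 3) := by continuity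
  have hfsurj : Function.Surjective (fun u : ℝ => u + u ^ 3) := by
    intro z
    have hsub := intermediate_value_univ (f := fun u : ℝ => u + u ^ 3)
      (-(1 + |z|)) (1 + |z|) hfcont
    apply hsub
    constructor
    · nlinarith [abs_nonneg z, neg_abs_le z, pow_nonneg (abs_nonneg z) 3]
    · nlinarith [abs_nonneg z, le_abs_self z, pow_nonneg (abs_nonneg z) 3]
  set e := StrictMono.orderIsoOfSurjective _ hfmono hfsurj with he
  have hce : ∀ x : ℝ, e x = x + x ^ 3 := fun x => rfl
  have hUz : ∀ z : ℝ, U z + (U z) ^ 3 = -z := fun z => by have := hU z; linarith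
  have hUeq : ∀ z : ℝ, U z = e.symm (-z) := by
    intro z
    apply hfmono.injective
    show U z + (U z) ^ 3 = e.symm (-z) + (e.symm (-z)) ^ 3
    rw [hUz z, ← hce, OrderIso.apply_symm_apply]
  have hUcont : Continuous U := by
    have : Continuous fun z : ℝ => e.symm (-z) :=
      (OrderIso.continuous e.symm).comp continuous_neg
    exact this.congr fun z => (hUeq z).symm
  intro y
  set u := U y with hu
  have hy : y = -(u + u ^ 3) := by have := hU y; linarith
  -- derivative
  have hg : HasDerivAt (fun x : ℝ => -(x + x ^ 3)) (-(1 + 3 * u ^ 2)) u := by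
    have h1 : HasDerivAt (fun x : ℝ => x + x ^ 3) (1 + 3 * u ^ 2) u := by
      have := (hasDerivAt_id u).add (hasDerivAt_pow 3 u)
      exact this
    exact h1.neg
  have hfg : ∀ᶠ z in nhds y, (fun x : ℝ => -(x + x ^ 3)) (U z) = z := by
    filter_upwards with z
    have := hUz z
    show -(U z + U z ^ 3) = z
    linarith
  have hderiv : HasDerivAt U (-(1 + 3 * u ^ 2))⁻¹ y := by
    refine HasDerivAt.of_local_left_inverse (f := fun x : ℝ => -(x + x ^ 3))
      hUcont.continuousAt hg ?_ hfg
    have : (0:ℝ) < 1 + 3 * u ^ 2 := by positivity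
    intro h
    nlinarith
  rw [hderiv.deriv]
  have hpos : (0:ℝ) < 1 + 3 * u ^ 2 := by positivity
  have h1 : 1 + (-(1 + 3 * u ^ 2))⁻¹ = 3 * u ^ 2 / (1 + 3 * u ^ 2) := by
    rw [inv_neg]
    field_simp
    ring
  rw [h1]
  rw [div_le_div_iff₀ (by positivity) hpos]
  have key : ∀ v : ℝ, (-(v + v ^ 3)) ^ 2 * (1 + 3 * v ^ 2)
      ≤ 3 * v ^ 2 * (3 * (1 + (-(v + v ^ 3)) ^ 2)) := by
    intro v
    nlinarith [sq_nonneg v, sq_nonneg (v ^ 2), sq_nonneg (1 + v ^ 2),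
      sq_nonneg (v * (1 + v ^ 2)), sq_nonneg (v ^ 2 * (1 + v ^ 2)), sq_nonneg (v ^ 3)]
  have hk := key u
  rw [← hy] at hk
  exact hk
end

section
/- Suppose $w:[0,T)\to\mathbb{R}$ is $C^2$ and satisfies $\ddot{w}(t) + m(t)\,w(t) = b$ with $0<m_1\le m(t)\le m_2$, $w(0)=1$, $\dot w(0)=\dot w_0$, and $b>0$. If $2b \le m_1$ and $T > \pi/\sqrt{m_1}$, then there exists $t_\ast \in (0, \pi/\sqrt{m_1}]$ with $w(t_\ast) \le 0$. -/
open Real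

/-- ODE comparison in the blow-up criterion: if `w'' + m(t) w = b` with
`0 < m₁ ≤ m(t) ≤ m₂`, `w(0) = 1`, `b > 0`, `2b ≤ m₁`, and the solution lives
past `π/√m₁`, then `w` becomes nonpositive by time `π/√m₁`. -/
theorem ode_comparison_blowup (w m : ℝ → ℝ) (T m₁ m₂ b w₀' : ℝ)
    (hT : Real.pi / Real.sqrt m₁ < T)
    (hw : ContDiffOn ℝ 2 w (Set.Ico 0 T))
    (hODE : ∀ t ∈ Set.Ico (0 : ℝ) T, iteratedDeriv 2 w t + m t * w t = b)
    (hm₁ : 0 < m₁) (hm : ∀ t ∈ Set.Ico (0 : ℝ) T, m₁ ≤ m t ∧ m t ≤ m₂)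
    (hw0 : w 0 = 1) (hw0' : deriv w 0 = w₀')
    (hb : 0 < b) (hbm : 2 * b ≤ m₁) :
    ∃ t ∈ Set.Ioc (0 : ℝ) (Real.pi / Real.sqrt m₁), w t ≤ 0 := by
  set s := Real.sqrt m₁ with hs_def
  have hs : 0 < s := Real.sqrt_pos.2 hm₁
  have hs2 : s ^ 2 = m₁ := Real.sq_sqrt hm₁.le
  set L := Real.pi / s with hL_def
  have hL0 : 0 < L := div_pos Real.pi_pos hs
  have hsL : s * L = Real.pi := mul_div_cancel₀ _ hs.ne'
  have hLT : L < T := hT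
  have hT0 : (0 : ℝ) < T := hL0.trans hLT
  by_contra hcon
  push_neg at hcon
  -- hcon : ∀ t ∈ Set.Ioc 0 L, 0 < w t
  have hIcoL : Set.Icc (0 : ℝ) L ⊆ Set.Ico 0 T := fun x hx =>
    ⟨hx.1, lt_of_le_of_lt hx.2 hLT⟩
  have hIoo : Set.Ioo (0 : ℝ) T ⊆ Set.Ico 0 T := Set.Ioo_subset_Ico_self
  have hwIoo : ContDiffOn ℝ 2 w (Set.Ioo 0 T) := hw.mono hIoo
  have hwc : ContinuousOn w (Set.Ico 0 T) := hw.continuousOn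
  set W' := derivWithin w (Set.Ico 0 T) with hW'def
  have hUD : UniqueDiffOn ℝ (Set.Ico (0 : ℝ) T) := uniqueDiffOn_Ico 0 T
  have hW'cont : ContinuousOn W' (Set.Ico 0 T) :=
    hw.continuousOn_derivWithin hUD (by norm_num)
  -- first derivative at interior points
  have hderiv1 : ∀ x ∈ Set.Ioo (0 : ℝ) T, HasDerivAt w (W' x) x := by
    intro x hx
    have hnx : Set.Ico (0 : ℝ) T ∈ nhds x := Filter.mem_of_superset (isOpen_Ioo.mem_nhds hx) hIoo
    have hdW : DifferentiableAt ℝ w x :=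
      ((hwIoo.differentiableOn (by norm_num) x hx).differentiableAt (isOpen_Ioo.mem_nhds hx))
    have h : W' x = deriv w x := derivWithin_of_mem_nhds hnx
    rw [h]
    exact hdW.hasDerivAt
  -- second derivative at interior points
  have hd2 : ContDiffOn ℝ 1 (deriv w) (Set.Ioo 0 T) :=
    hwIoo.deriv_of_isOpen isOpen_Ioo (by norm_num)
  have hit2 : iteratedDeriv 2 w = deriv (deriv w) := by
    rw [iteratedDeriv_succ, iteratedDeriv_one]
  have hderiv2 : ∀ x ∈ Set.Ioo (0 : ℝ) T, HasDerivAt W' (iteratedDeriv 2 w x) x := by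
    intro x hx
    have hdW : DifferentiableAt ℝ (deriv w) x :=
      ((hd2.differentiableOn one_ne_zero x hx).differentiableAt (isOpen_Ioo.mem_nhds hx))
    have h1 : HasDerivAt (deriv w) (iteratedDeriv 2 w x) x := by
      rw [hit2]; exact hdW.hasDerivAt
    apply h1.congr_of_eventuallyEq
    filter_upwards [isOpen_Ioo.mem_nhds hx] with y hy
    exact derivWithin_of_mem_nhds (Filter.mem_of_superset (isOpen_Ioo.mem_nhds hy) hIoo)
  have hit2cont : ContinuousOn (iteratedDeriv 2 w) (Set.Ioo 0 T) := by
    rw [hit2]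
    exact hd2.continuousOn_deriv_of_isOpen isOpen_Ioo le_rfl
  -- the auxiliary function g = w' sin(st) - s w cos(st)
  set g : ℝ → ℝ := fun t => W' t * Real.sin (s * t) - s * (w t * Real.cos (s * t)) with hg_def
  have hgcont : ContinuousOn g (Set.Ico 0 T) := by
    apply ContinuousOn.sub
    · exact hW'cont.mul ((Real.continuous_sin.comp (continuous_const.mul continuous_id)).continuousOn)
    · exact continuousOn_const.mul
        (hwc.mul ((Real.continuous_cos.comp (continuous_const.mul continuous_id)).continuousOn))
  have hgderiv : ∀ x ∈ Set.Ioo (0 : ℝ) T,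
      HasDerivAt g ((iteratedDeriv 2 w x + m₁ * w x) * Real.sin (s * x)) x := by
    intro x hx
    have hlin : HasDerivAt (fun t : ℝ => s * t) s x := by
      simpa using (hasDerivAt_id x).const_mul s
    have hsin : HasDerivAt (fun t : ℝ => Real.sin (s * t)) (Real.cos (s * x) * s) x :=
      (Real.hasDerivAt_sin (s * x)).comp x hlin
    have hcos : HasDerivAt (fun t : ℝ => Real.cos (s * t)) (-Real.sin (s * x) * s) x :=
      (Real.hasDerivAt_cos (s * x)).comp x hlin
    have hD : HasDerivAt g
        ((iteratedDeriv 2 w x * Real.sin (s * x) + W' x * (Real.cos (s * x) * s))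
          - s * (W' x * Real.cos (s * x) + w x * (-Real.sin (s * x) * s))) x := by
      exact (((hderiv2 x hx).mul hsin).sub
        ((((hderiv1 x hx).mul hcos)).const_mul s))
    convert hD using 1
    rw [← hs2]; ring
  -- the key inequality on [u, L]
  have key : ∀ u ∈ Set.Ioc (0 : ℝ) L,
      g L - g u ≤ b / s * (Real.cos (s * u) - Real.cos (s * L)) := by
    intro u hu
    have huL : u ≤ L := hu.2
    have hsubIoo : Set.Icc u L ⊆ Set.Ioo 0 T := fun x hx =>
      ⟨lt_of_lt_of_le hu.1 hx.1, lt_of_le_of_lt hx.2 hLT⟩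
    have huIcc : Set.uIcc u L = Set.Icc u L := Set.uIcc_of_le huL
    have hint1 : IntervalIntegrable
        (fun t => (iteratedDeriv 2 w t + m₁ * w t) * Real.sin (s * t)) MeasureTheory.volume u L := by
      apply ContinuousOn.intervalIntegrable
      rw [huIcc]
      exact ((hit2cont.mono hsubIoo).add
        (continuousOn_const.mul (hwc.mono (fun x hx => hIoo (hsubIoo hx))))).mul
        ((Real.continuous_sin.comp (continuous_const.mul continuous_id)).continuousOn)
    have hint2 : IntervalIntegrable (fun t => b * Real.sin (s * t)) MeasureTheory.volume u L :=
      ((continuous_const.mul (Real.continuous_sin.comp (continuous_const.mul continuous_id))).intervalIntegrable u L)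
    have hFTC1 : ∫ t in u..L, (iteratedDeriv 2 w t + m₁ * w t) * Real.sin (s * t) = g L - g u := by
      apply intervalIntegral.integral_eq_sub_of_hasDerivAt
      · intro x hx
        rw [huIcc] at hx
        exact hgderiv x (hsubIoo hx)
      · exact hint1
    have hFTC2 : ∫ t in u..L, b * Real.sin (s * t)
        = b / s * (Real.cos (s * u) - Real.cos (s * L)) := by
      have : ∀ x ∈ Set.uIcc u L,
          HasDerivAt (fun t => -(b / s) * Real.cos (s * t)) (b * Real.sin (s * x)) x := by
        intro x _
        have hlin : HasDerivAt (fun t : ℝ => s * t) s x := by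
          simpa using (hasDerivAt_id x).const_mul s
        have hcos : HasDerivAt (fun t : ℝ => Real.cos (s * t)) (-Real.sin (s * x) * s) x :=
          (Real.hasDerivAt_cos (s * x)).comp x hlin
        have := hcos.const_mul (-(b / s))
        refine this.congr_deriv ?_
        rw [show -(b / s) * (-Real.sin (s * x) * s) = b / s * s * Real.sin (s * x) by ring, div_mul_cancel₀ b hs.ne']
      rw [intervalIntegral.integral_eq_sub_of_hasDerivAt this hint2]
      ring
    have hmono : ∫ t in u..L, (iteratedDeriv 2 w t + m₁ * w t) * Real.sin (s * t)
        ≤ ∫ t in u..L, b * Real.sin (s * t) := by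
      apply intervalIntegral.integral_mono_on huL hint1 hint2
      intro t ht
      have htIco : t ∈ Set.Ico (0 : ℝ) T :=
        hIoo (hsubIoo ht)
      have hwt : 0 < w t := hcon t ⟨lt_of_lt_of_le hu.1 ht.1, ht.2⟩
      have hmt : m₁ ≤ m t := (hm t htIco).1
      have hode := hODE t htIco
      have hsin : 0 ≤ Real.sin (s * t) := by
        apply Real.sin_nonneg_of_nonneg_of_le_pi
        · exact mul_nonneg hs.le (hu.1.le.trans ht.1)
        · rw [← hsL]
          exact mul_le_mul_of_nonneg_left ht.2 hs.le
      have h1 : iteratedDeriv 2 w t + m₁ * w t ≤ b := by nlinarith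
      nlinarith
    rw [hFTC1, hFTC2] at hmono
    exact hmono
  -- take the limit u → 0⁺
  haveI hne : (nhdsWithin (0 : ℝ) (Set.Ioc 0 L)).NeBot := by
    apply mem_closure_iff_nhdsWithin_neBot.mp
    rw [closure_Ioc hL0.ne]
    exact ⟨le_refl 0, hL0.le⟩
  have hlim1 : Filter.Tendsto (fun u => g L - g u) (nhdsWithin (0 : ℝ) (Set.Ioc 0 L))
      (nhds (g L - g 0)) := by
    apply Filter.Tendsto.const_sub
    have h0 : (0 : ℝ) ∈ Set.Ico (0 : ℝ) T := ⟨le_refl 0, hT0⟩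
    have := (hgcont 0 h0).tendsto
    exact this.mono_left (nhdsWithin_mono 0 (fun x hx => hIcoL ⟨hx.1.le, hx.2⟩))
  have hlim2 : Filter.Tendsto (fun u => b / s * (Real.cos (s * u) - Real.cos (s * L)))
      (nhdsWithin (0 : ℝ) (Set.Ioc 0 L))
      (nhds (b / s * (Real.cos (s * 0) - Real.cos (s * L)))) := by
    apply Filter.Tendsto.mono_left _ nhdsWithin_le_nhds
    exact ((continuous_const.mul (((Real.continuous_cos.comp (continuous_const.mul continuous_id))).sub continuous_const)).tendsto 0)
  have hfinal : g L - g 0 ≤ b / s * (Real.cos (s * 0) - Real.cos (s * L)) := by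
    apply le_of_tendsto_of_tendsto hlim1 hlim2
    filter_upwards [self_mem_nhdsWithin] with u hu
    exact key u hu
  -- compute g 0, g L and conclude
  have hgL : g L = s * w L := by
    simp only [hg_def, hsL, Real.sin_pi, Real.cos_pi]
    ring
  have hg0 : g 0 = -s := by
    simp only [hg_def, mul_zero, Real.sin_zero, Real.cos_zero, hw0]
    ring
  rw [hgL, hg0] at hfinal
  rw [mul_zero, Real.cos_zero, hsL, Real.cos_pi] at hfinal
  -- hfinal : s * w L + s ≤ b / s * 2
  have hwL : 0 < w L := hcon L ⟨hL0, le_refl L⟩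
  have hbs : b / s * (1 - -1) = 2 * b / s := by ring
  have hss : s * s = m₁ := by nlinarith [hs2]
  have h2 : s * (s * w L - -s) ≤ s * (b / s * (1 - -1)) :=
    mul_le_mul_of_nonneg_left hfinal hs.le
  have h3 : s * (b / s * (1 - -1)) = 2 * b := by
    field_simp
    ring
  nlinarith [mul_pos hm₁ hwL]
end

section
/- Suppose $w:[0,T)\to\mathbb{R}$ is $C^2$ and satisfies $\ddot w(t) + m_1 w(t) \le b$ on $[0,\pi/\sqrt{m_1}]\cap[0,T)$, with $m_1>0$, $b>0$, $w(0)=1$, $\dot w(0)=\dot w_0 \le -\sqrt{2b-m_1}$ (assuming $2b\ge m_1$), and $T>\pi/\sqrt{m_1}$. Then $w$ vanishes at some point of $[0,\pi/\sqrt{m_1}]$. -/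
open Real Topology Filter

set_option maxHeartbeats 1600000 in
/-- Blow-up criterion (B2): if `w'' + m₁ w ≤ b` on `[0, π/√m₁]`, with `m₁ > 0`,
`b > 0`, `2b ≥ m₁`, `w(0) = 1` and `w'(0) ≤ -√(2b - m₁)`, and the solution lives
past `π/√m₁`, then `w` vanishes somewhere in `[0, π/√m₁]`. -/
theorem ode_blowup_criterion_B2 (w : ℝ → ℝ) (T m₁ b w₀' : ℝ)
    (hm₁ : 0 < m₁) (hb : 0 < b) (hbm : m₁ ≤ 2 * b)
    (hT : Real.pi / Real.sqrt m₁ < T)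
    (hw : ContDiffOn ℝ 2 w (Set.Ico 0 T))
    (hODE : ∀ t ∈ Set.Icc (0 : ℝ) (Real.pi / Real.sqrt m₁),
      iteratedDeriv 2 w t + m₁ * w t ≤ b)
    (hw0 : w 0 = 1) (hw0' : deriv w 0 = w₀')
    (hw0'' : w₀' ≤ -Real.sqrt (2 * b - m₁)) :
    ∃ t ∈ Set.Icc (0 : ℝ) (Real.pi / Real.sqrt m₁), w t = 0 := by
  set r := Real.sqrt m₁ with hrdef
  have hr0 : 0 < r := Real.sqrt_pos.2 hm₁
  have hrr : r * r = m₁ := Real.mul_self_sqrt hm₁.le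
  clear_value r
  have hr2 : r ^ 2 = m₁ := by rw [sq, hrr]
  have hpi : 0 < Real.pi / r := div_pos Real.pi_pos hr0
  have hT0 : 0 < T := hpi.trans hT
  set c : ℝ := -w₀' with hcdef
  have hc0 : 0 ≤ c := by rw [hcdef]; linarith [Real.sqrt_nonneg (2 * b - m₁)]
  have h2bm : 0 ≤ 2 * b - m₁ := by linarith
  have hcsq : 2 * b - m₁ ≤ c ^ 2 := by
    have h1 : Real.sqrt (2 * b - m₁) ≤ c := by rw [hcdef]; linarith
    nlinarith only [h1, Real.sq_sqrt h2bm, Real.sqrt_nonneg (2 * b - m₁)]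
  clear_value c
  set k : ℝ := (b - m₁) / r with hkdef
  have hkr : k * r = b - m₁ := by rw [hkdef]; exact div_mul_cancel₀ _ hr0.ne'
  clear_value k
  have hk2 : k ^ 2 * m₁ = (b - m₁) ^ 2 := by rw [← hkr, mul_pow, hr2]
  have hD : (c ^ 2 + k ^ 2) * m₁ = c ^ 2 * m₁ + (b - m₁) ^ 2 := by
    rw [add_mul, hk2]
  have hDb : b ^ 2 ≤ (c ^ 2 + k ^ 2) * m₁ := by
    rw [hD]
    nlinarith only [mul_nonneg (sub_nonneg.2 hcsq) hm₁.le]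
  have hck0 : 0 < c ^ 2 + k ^ 2 := by
    by_contra h
    push_neg at h
    have h6 : (c ^ 2 + k ^ 2) * m₁ ≤ 0 := mul_nonpos_of_nonpos_of_nonneg h hm₁.le
    nlinarith only [hDb, h6, hb]
  set R := Real.sqrt (c ^ 2 + k ^ 2) with hRdef
  have hR0 : 0 < R := Real.sqrt_pos.2 hck0
  have hR2 : R ^ 2 = c ^ 2 + k ^ 2 := Real.sq_sqrt hck0.le
  clear_value R
  have hsq : (R * r) ^ 2 = c ^ 2 * m₁ + (b - m₁) ^ 2 := by
    rw [mul_pow, hR2, hr2, ← hD]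
  have hbRr : b ≤ R * r := by
    nlinarith only [hsq, hDb, hD, hb, mul_nonneg hR0.le hr0.le]
  have hkR : |k| ≤ R := by
    rw [← Real.sqrt_sq_eq_abs, hRdef]
    exact Real.sqrt_le_sqrt (by linarith [sq_nonneg c])
  have hkR1 : k / R ≤ 1 := (div_le_one hR0).2 ((le_abs_self k).trans hkR)
  have hkR2 : -1 ≤ k / R := by
    rw [le_div_iff₀ hR0]
    have := neg_abs_le k
    linarith
  set α := Real.arccos (k / R) with hαdef
  have hcosα : Real.cos α = k / R := Real.cos_arccos hkR2 hkR1
  have hsinα : Real.sin α = c / R := by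
    rw [hαdef, Real.sin_arccos]
    have h1 : 1 - (k / R) ^ 2 = (c / R) ^ 2 := by
      field_simp
      linarith only [hR2]
    rw [h1, Real.sqrt_sq (div_nonneg hc0 hR0.le)]
  have hα0 : 0 ≤ α := Real.arccos_nonneg _
  have hαπ : α ≤ Real.pi := Real.arccos_le_pi _
  clear_value α
  set t₁ := α / r with ht₁def
  have hrt₁ : r * t₁ = α := by rw [ht₁def]; field_simp
  have ht₁0 : 0 ≤ t₁ := div_nonneg hα0 hr0.le
  have ht₁π : t₁ ≤ Real.pi / r := by rw [ht₁def]; gcongr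
  clear_value t₁
  have ht₁T : t₁ < T := lt_of_le_of_lt ht₁π hT
  have hsub : Set.Icc 0 t₁ ⊆ Set.Ico 0 T := fun x hx => ⟨hx.1, lt_of_le_of_lt hx.2 ht₁T⟩
  -- the comparison functions
  set φ : ℝ → ℝ := fun t => c * Real.cos (r * t) - k * Real.sin (r * t) with hφdef
  set φd : ℝ → ℝ := fun t => (-(c * Real.sin (r * t)) - k * Real.cos (r * t)) * r with hφddef
  set w1 : ℝ → ℝ := derivWithin w (Set.Ico 0 T) with hw1def
  set G : ℝ → ℝ := fun t => w1 t * φ t - w t * φd t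
      - b / r * (c * Real.sin (r * t) + k * Real.cos (r * t)) with hGdef
  clear_value φ φd w1 G
  have hrm : ∀ t : ℝ, HasDerivAt (fun t : ℝ => r * t) r t := fun t => by
    simpa using (hasDerivAt_id t).const_mul r
  have hφ_deriv : ∀ t : ℝ, HasDerivAt φ (φd t) t := by
    intro t
    rw [hφdef, hφddef]
    have := ((hrm t).cos.const_mul c).sub ((hrm t).sin.const_mul k)
    exact this.congr_deriv (by ring)
  have hφd_deriv : ∀ t : ℝ, HasDerivAt φd (-(m₁ * φ t)) t := by
    intro t
    rw [hφddef, hφdef]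
    have := (((hrm t).sin.const_mul c).neg.sub ((hrm t).cos.const_mul k)).mul_const r
    exact this.congr_deriv (by rw [← hrr]; ring)
  have hB_deriv : ∀ t : ℝ, HasDerivAt
      (fun t => b / r * (c * Real.sin (r * t) + k * Real.cos (r * t))) (b * φ t) t := by
    intro t
    rw [hφdef]
    have := (((hrm t).sin.const_mul c).add ((hrm t).cos.const_mul k)).const_mul (b / r)
    exact this.congr_deriv (by field_simp; ring)
  have hUD : UniqueDiffOn ℝ (Set.Ico 0 T) := uniqueDiffOn_Ico 0 T
  have hw1cd : ContDiffOn ℝ 1 w1 (Set.Ico 0 T) := by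
    rw [hw1def]; exact hw.derivWithin hUD (by norm_num)
  have hw1cont : ContinuousOn w1 (Set.Ico 0 T) := hw1cd.continuousOn
  have hwIoo : ContDiffOn ℝ 2 w (Set.Ioo 0 T) := hw.mono Set.Ioo_subset_Ico_self
  have hdw : ContDiffOn ℝ 1 (deriv w) (Set.Ioo 0 T) :=
    hwIoo.deriv_of_isOpen isOpen_Ioo (by norm_num)
  have hφ_nonneg : ∀ x ∈ Set.Icc (0 : ℝ) t₁, 0 ≤ φ x := by
    intro x hx
    have h1 : φ x = R * Real.sin (α - r * x) := by
      rw [hφdef, Real.sin_sub, hsinα, hcosα]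
      field_simp
    rw [h1]
    apply mul_nonneg hR0.le
    apply Real.sin_nonneg_of_nonneg_of_le_pi
    · have : r * x ≤ α := by
        rw [← hrt₁]
        exact mul_le_mul_of_nonneg_left hx.2 hr0.le
      linarith
    · have : 0 ≤ r * x := mul_nonneg hr0.le hx.1
      linarith
  -- G is antitone on [0, t₁]
  have hGanti : AntitoneOn G (Set.Icc 0 t₁) := by
    apply antitoneOn_of_hasDerivWithinAt_nonpos (convex_Icc 0 t₁)
      (f' := fun x => (iteratedDeriv 2 w x + m₁ * w x - b) * φ x)
    · -- continuity
      have hφcont : Continuous φ := by rw [hφdef]; fun_prop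
      have hφdcont : Continuous φd := by rw [hφddef]; fun_prop
      rw [hGdef]
      exact (((hw1cont.mono hsub).mul hφcont.continuousOn).sub
        ((hw.continuousOn.mono hsub).mul hφdcont.continuousOn)).sub (by fun_prop)
    · intro x hx
      rw [interior_Icc] at hx
      have hx0T : x ∈ Set.Ioo 0 T := ⟨hx.1, hx.2.trans ht₁T⟩
      have hnhds : Set.Ioo 0 T ∈ 𝓝 x := isOpen_Ioo.mem_nhds hx0T
      have hdwd : DifferentiableAt ℝ (deriv w) x :=
        (hdw.differentiableOn one_ne_zero x hx0T).differentiableAt hnhds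
      have h2 : HasDerivAt (deriv w) (iteratedDeriv 2 w x) x := by
        have := hdwd.hasDerivAt
        rwa [show iteratedDeriv 2 w = deriv (deriv w) by
          rw [iteratedDeriv_succ, iteratedDeriv_one]]
      have hweq : w1 =ᶠ[𝓝 x] deriv w := by
        filter_upwards [hnhds] with y hy
        rw [hw1def]
        exact derivWithin_of_mem_nhds
          (Filter.mem_of_superset (isOpen_Ioo.mem_nhds hy) Set.Ioo_subset_Ico_self)
      have h2' : HasDerivAt w1 (iteratedDeriv 2 w x) x := h2.congr_of_eventuallyEq hweq
      have hw1x : w1 x = deriv w x := by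
        rw [hw1def]
        exact derivWithin_of_mem_nhds
          (Filter.mem_of_superset hnhds Set.Ioo_subset_Ico_self)
      have hwd : HasDerivAt w (w1 x) x := by
        rw [hw1x]
        exact ((hwIoo.differentiableOn (by norm_num) x hx0T).differentiableAt hnhds).hasDerivAt
      have hG' : HasDerivAt G ((iteratedDeriv 2 w x + m₁ * w x - b) * φ x) x := by
        rw [hGdef]
        have := ((h2'.mul (hφ_deriv x)).sub (hwd.mul (hφd_deriv x))).sub (hB_deriv x)
        exact this.congr_deriv (by ring)
      exact hG'.hasDerivWithinAt
    · intro x hx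
      rw [interior_Icc] at hx
      have hODEx := hODE x ⟨hx.1.le, hx.2.le.trans ht₁π⟩
      have hφx := hφ_nonneg x ⟨hx.1.le, hx.2.le⟩
      exact mul_nonpos_of_nonpos_of_nonneg (by linarith) hφx
  -- endpoint computations
  have hcos1 : Real.cos (r * t₁) = k / R := by rw [hrt₁]; exact hcosα
  have hsin1 : Real.sin (r * t₁) = c / R := by rw [hrt₁]; exact hsinα
  have hGt₁ : G t₁ = w t₁ * (R * r) - b / r * R := by
    have e3 : c * (c / R) + k * (k / R) = R := by
      field_simp
      linarith only [hR2]
    have e2 : (-(c * (c / R)) - k * (k / R)) * r = -(R * r) := by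
      linear_combination (-r) * e3
    have h1 : G t₁ = w1 t₁ * (c * (k / R) - k * (c / R))
        - w t₁ * ((-(c * (c / R)) - k * (k / R)) * r)
        - b / r * (c * (c / R) + k * (k / R)) := by
      rw [hGdef, hφdef, hφddef]
      simp only [hcos1, hsin1]
    rw [h1, e2, e3]
    ring
  have hG0 : G 0 = w1 0 * c + w 0 * (k * r) - b / r * k := by
    rw [hGdef, hφdef, hφddef]
    simp only [mul_zero, Real.cos_zero, Real.sin_zero]
    ring
  have hw10 : w1 0 * c = -c * c := by
    by_cases hdiff : DifferentiableAt ℝ w 0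
    · have h1 : w1 0 = deriv w 0 := by
        rw [hw1def]; exact hdiff.derivWithin (hUD 0 ⟨le_rfl, hT0⟩)
      rw [h1, hw0', hcdef]; ring
    · have h0 : deriv w 0 = 0 := deriv_zero_of_not_differentiableAt hdiff
      have hc : c = 0 := by rw [hcdef, ← hw0', h0, neg_zero]
      rw [hc]; ring
  have hkey : G t₁ ≤ G 0 :=
    hGanti (Set.left_mem_Icc.2 ht₁0) (Set.right_mem_Icc.2 ht₁0) ht₁0
  -- the final algebraic estimate
  have h3 : b * (R * r) ≤ c ^ 2 * m₁ + (b - m₁) ^ 2 := by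
    linarith only [hsq, mul_nonneg (hb.le.trans hbRr) (sub_nonneg.2 hbRr)]
  have h2 : -c * c + k * r + b / r * R - b / r * k ≤ 0 := by
    have e1 : b / r * R = b * (R * r) / m₁ := by
      rw [← hrr]; field_simp
    have e2' : b / r * k = b * (b - m₁) / m₁ := by
      rw [← hkr, ← hrr]; field_simp
    rw [e1, e2', hkr]
    have h4 : (b * (R * r) - b * (b - m₁)) / m₁ ≤ c * c - (b - m₁) := by
      rw [div_le_iff₀ hm₁]
      nlinarith only [h3]
    have h5 : b * (R * r) / m₁ - b * (b - m₁) / m₁ = (b * (R * r) - b * (b - m₁)) / m₁ := by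
      ring
    linarith [h4, h5.le, h5.ge]
  have hwt : w t₁ ≤ 0 := by
    have hs0 : 0 < R * r := mul_pos hR0 hr0
    have hmain : w t₁ * (R * r) ≤ 0 := by
      rw [hGt₁, hG0, hw10, hw0] at hkey
      linarith only [hkey, h2]
    by_contra h
    push_neg at h
    linarith only [hmain, mul_pos h hs0]
  -- intermediate value theorem
  have hconn : ContinuousOn w (Set.Icc 0 t₁) := hw.continuousOn.mono hsub
  have hmem : (0 : ℝ) ∈ Set.Icc (w t₁) (w 0) := by
    rw [hw0]; exact ⟨hwt, zero_le_one⟩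
  obtain ⟨t, ht, hwt0⟩ := intermediate_value_Icc' ht₁0 hconn hmem
  exact ⟨t, ⟨ht.1, ht.2.trans ht₁π⟩, hwt0⟩
end

section
/- Let $a,b \in \mathbb{R}$ with $|a|\le 1/4$ and $|b|\le 1/4$. Then $\bigl|(e^{a}-a) - (e^{b}-b)\bigr| \le c_1\,|a-b|$, where $c_1 := \max\{1-2e^{-1/4}(1-e^{-1/2}),\; 2e^{1/4}(e^{1/2}-1)-1\} < 1$. -/
/-- Contraction estimate for the Picard iteration of the semilinear Poisson
equation: for `|a|, |b| ≤ 1/4`,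
`|(e^a - a) - (e^b - b)| ≤ c₁ |a - b|` with
`c₁ = max (1 - 2e^{-1/4}(1-e^{-1/2})) (2e^{1/4}(e^{1/2}-1) - 1) < 1`. -/
theorem exp_sub_id_contraction :
    (max (1 - 2 * Real.exp (-(1 / 4)) * (1 - Real.exp (-(1 / 2))))
        (2 * Real.exp (1 / 4) * (Real.exp (1 / 2) - 1) - 1)) < 1 ∧
    ∀ a b : ℝ, |a| ≤ 1 / 4 → |b| ≤ 1 / 4 →
      |(Real.exp a - a) - (Real.exp b - b)| ≤
        (max (1 - 2 * Real.exp (-(1 / 4)) * (1 - Real.exp (-(1 / 2))))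
          (2 * Real.exp (1 / 4) * (Real.exp (1 / 2) - 1) - 1)) * |a - b| := by
  have ht1 : (1:ℝ) ≤ Real.exp (1/4) := Real.one_le_exp (by norm_num)
  have ht4 : (Real.exp (1/4))^4 = Real.exp 1 := by
    rw [← Real.exp_nat_mul]; norm_num
  have hE : Real.exp 1 < 2.7182818286 := Real.exp_one_lt_d9
  have hsq : Real.exp (1/4) * Real.exp (1/4) = Real.exp (1/2) := by
    rw [← Real.exp_add]; norm_num
  have hq : (3:ℝ)/2 ≤ Real.exp (1/2) := by
    have := Real.add_one_le_exp (1/2 : ℝ); linarith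
  set t := Real.exp (1/4) with htdef
  -- numeric bound on t
  have ht_ub : t < 1.29 := by nlinarith [ht4, hE, ht1]
  -- second branch bounds
  have hb2lt1 : 2 * Real.exp (1 / 4) * (Real.exp (1 / 2) - 1) - 1 < 1 := by
    rw [← hsq]; nlinarith
  have hb1lt1 : 1 - 2 * Real.exp (-(1 / 4)) * (1 - Real.exp (-(1 / 2))) < 1 := by
    have h1 : (0:ℝ) < Real.exp (-(1/4)) := Real.exp_pos _
    have h2 : Real.exp (-(1/2):ℝ) < 1 := Real.exp_lt_one_iff.mpr (by norm_num)
    nlinarith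
  constructor
  · exact max_lt hb1lt1 hb2lt1
  · intro a b ha hb
    have key : |(Real.exp a - a) - (Real.exp b - b)| ≤ (t - 1) * |a - b| := by
      have h := Convex.norm_image_sub_le_of_norm_hasDerivWithin_le
        (f := fun x => Real.exp x - x) (f' := fun x => Real.exp x - 1)
        (s := Set.Icc (-(1/4):ℝ) (1/4)) (C := t - 1)
        (fun x _ => ((Real.hasDerivAt_exp x).sub (hasDerivAt_id x)).hasDerivWithinAt)
        (fun x hx => by
          simp only [Real.norm_eq_abs]
          rw [abs_le]
          constructor
          · have hx1 : Real.exp (-(1/4)) ≤ Real.exp x := Real.exp_le_exp.mpr hx.1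
            have : Real.exp (-(1/4)) * t = 1 := by
              rw [htdef, ← Real.exp_add]; norm_num
            have h0 : (0:ℝ) < Real.exp (-(1/4)) := Real.exp_pos _
            nlinarith
          · have : Real.exp x ≤ t := Real.exp_le_exp.mpr hx.2
            linarith)
        (convex_Icc _ _)
        (Set.mem_Icc.mpr (abs_le.mp hb))
        (Set.mem_Icc.mpr (abs_le.mp ha))
      simpa [Real.norm_eq_abs] using h
    refine key.trans (mul_le_mul_of_nonneg_right ?_ (abs_nonneg _))
    refine le_max_of_le_right ?_
    rw [← hsq]; nlinarith
end

section
/- Let $\overline{U}$ satisfy $y+\overline{U}(y)+\overline{U}(y)^3=0$. Then $\sup_{y\in\mathbb{R}} (y^{2/3}+8)\,|\overline{U}'(y)| < \infty$, and moreover $\lim_{|y|\to\infty} (y^{2/3}+8)\,|\overline{U}'(y)| = 1/3$. -/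
open Filter

/-- Limit of the weight function along `atTop`. -/
lemma burgers_aux_Hlim :
    Tendsto (fun t : ℝ => ((t * (1 + t ^ 2)) ^ ((2 : ℝ) / 3) + 8) * (1 + 3 * t ^ 2)⁻¹)
      atTop (nhds (1 / 3)) := by
  -- φ s = ((s+1)^(2/3) + 8 s)/(s+3), continuous at 0 with value 1/3
  have h0 : Tendsto (fun t : ℝ => (t ^ 2)⁻¹) atTop (nhds 0) :=
    (tendsto_pow_atTop two_ne_zero).inv_tendsto_atTop
  have t1 : Tendsto (fun s : ℝ => s + 1) (nhds 0) (nhds 1) := by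
    simpa using ((continuous_add_right (1 : ℝ)).tendsto (0 : ℝ))
  have t2 : Tendsto (fun s : ℝ => (s + 1) ^ ((2 : ℝ) / 3)) (nhds 0) (nhds 1) := by
    have hc : ContinuousAt (fun x : ℝ => x ^ ((2 : ℝ) / 3)) 1 :=
      Real.continuousAt_rpow_const 1 (2 / 3) (Or.inl one_ne_zero)
    have := hc.tendsto.comp t1
    simpa [Function.comp_def, Real.one_rpow] using this
  have t3 : Tendsto (fun s : ℝ => (s + 1) ^ ((2 : ℝ) / 3) + 8 * s) (nhds 0) (nhds 1) := by
    have h8 : Tendsto (fun s : ℝ => 8 * s) (nhds 0) (nhds 0) := by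
      simpa using (continuous_mul_left (8 : ℝ)).tendsto (0 : ℝ)
    simpa using t2.add h8
  have t4 : Tendsto (fun s : ℝ => s + 3) (nhds 0) (nhds 3) := by
    simpa using ((continuous_add_right (3 : ℝ)).tendsto (0 : ℝ))
  have tφ : Tendsto (fun s : ℝ => ((s + 1) ^ ((2 : ℝ) / 3) + 8 * s) / (s + 3)) (nhds 0)
      (nhds (1 / 3)) := t3.div t4 (by norm_num)
  have tcomp : Tendsto
      (fun t : ℝ => (((t ^ 2)⁻¹ + 1) ^ ((2 : ℝ) / 3) + 8 * (t ^ 2)⁻¹) / ((t ^ 2)⁻¹ + 3))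
      atTop (nhds (1 / 3)) := tφ.comp h0
  refine tcomp.congr' ?_
  filter_upwards [eventually_ge_atTop (1 : ℝ)] with t ht
  have ht0 : (0 : ℝ) < t := lt_of_lt_of_le one_pos ht
  have ht2 : (0 : ℝ) < t ^ 2 := by positivity
  have htne : t ≠ 0 := ne_of_gt ht0
  -- rewrite (t*(1+t^2))^(2/3) = t^2 * ((t^2)⁻¹+1)^(2/3)
  have key : (t * (1 + t ^ 2)) ^ ((2 : ℝ) / 3) = t ^ 2 * ((t ^ 2)⁻¹ + 1) ^ ((2 : ℝ) / 3) := by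
    have h1 : t * (1 + t ^ 2) = t ^ 3 * ((t ^ 2)⁻¹ + 1) := by
      field_simp
    rw [h1, Real.mul_rpow (by positivity) (by positivity)]
    congr 1
    have h2 : (t ^ 3 : ℝ) = t ^ (3 : ℝ) := by
      rw [← Real.rpow_natCast t 3]; norm_num
    rw [h2, ← Real.rpow_natCast t 2, ← Real.rpow_mul ht0.le]
    norm_num
  rw [key]
  generalize ((t ^ 2)⁻¹ + 1) ^ ((2 : ℝ) / 3) = A
  field_simp

/-- The weighted derivative `(|y|^{2/3}+8)|Ubar'(y)|` of the Burgers profile is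
bounded on `ℝ` and converges to `1/3` as `|y| → ∞`. -/
theorem burgers_profile_weighted_deriv (U : ℝ → ℝ)
    (hU : ∀ y : ℝ, y + U y + (U y) ^ 3 = 0) :
    (∃ C : ℝ, ∀ y : ℝ, (|y| ^ ((2 : ℝ) / 3) + 8) * |deriv U y| ≤ C) ∧
    Tendsto (fun y : ℝ => (|y| ^ ((2 : ℝ) / 3) + 8) * |deriv U y|)
      (cocompact ℝ) (nhds (1 / 3)) := by
  -- the forward map
  set g : ℝ → ℝ := fun u => u + u ^ 3 with hg
  have hgmono : StrictMono g := strictMono_id.add_monotone (Odd.strictMono_pow (⟨1, by norm_num⟩ : Odd 3)).monotone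
  have hgcont : Continuous g := by continuity
  have hgtop : Tendsto g atTop atTop :=
    Tendsto.atTop_add_atTop tendsto_id (tendsto_pow_atTop (by norm_num))
  have hgbot : Tendsto g atBot atBot := by
    have h3 : Tendsto (fun u : ℝ => u ^ 3) atBot atBot := by
      have h := (tendsto_pow_atTop (α := ℝ) (n := 3) (by norm_num)).comp tendsto_neg_atBot_atTop
      have h2 : Tendsto (fun u : ℝ => -((-u) ^ 3)) atBot atBot := tendsto_neg_atTop_atBot.comp h
      exact h2.congr fun u => by ring
    exact Tendsto.atBot_add_atBot tendsto_id h3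
  have hgsurj : Function.Surjective g := hgcont.surjective hgtop hgbot
  set e : ℝ ≃o ℝ := StrictMono.orderIsoOfSurjective g hgmono hgsurj with he
  have heg : ∀ u, e u = g u := fun u =>
    congrFun (StrictMono.coe_orderIsoOfSurjective g hgmono hgsurj) u
  have hinv : ∀ y, g (U y) = -y := by
    intro y; have := hU y; simp only [hg]; linarith
  have hUfun : ∀ y, U y = e.symm (-y) := by
    intro y
    apply e.injective
    rw [OrderIso.apply_symm_apply, heg, hinv]
  have hUcont : Continuous U := by
    have : Continuous fun y : ℝ => e.symm (-y) :=
      (OrderIso.continuous e.symm).comp continuous_neg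
    exact this.congr fun y => (hUfun y).symm
  -- derivative
  have hderiv : ∀ y, HasDerivAt U (-(1 + 3 * (U y) ^ 2))⁻¹ y := by
    intro y
    have hf : HasDerivAt (fun u : ℝ => -(u + u ^ 3)) (-(1 + 3 * (U y) ^ 2)) (U y) := by
      have h1 : HasDerivAt (fun u : ℝ => u + u ^ 3) (1 + 3 * (U y) ^ 2) (U y) := by
        have h := (hasDerivAt_id (U y)).add (hasDerivAt_pow 3 (U y))
        norm_num at h
        exact h
      exact h1.neg
    have hne : (-(1 + 3 * (U y) ^ 2) : ℝ) ≠ 0 := by nlinarith [sq_nonneg (U y)]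
    refine HasDerivAt.of_local_left_inverse hUcont.continuousAt hf hne ?_
    refine Eventually.of_forall fun z => ?_
    have := hinv z
    simp only [hg] at this
    linarith [this]
  have habsderiv : ∀ y, |deriv U y| = (1 + 3 * (U y) ^ 2)⁻¹ := by
    intro y
    rw [(hderiv y).deriv]
    have hp : (0 : ℝ) < 1 + 3 * (U y) ^ 2 := by positivity
    rw [abs_inv, abs_neg, abs_of_pos hp]
  -- |y| = |U y| * (1 + (U y)^2)
  have habsy : ∀ y, |y| = |U y| * (1 + (U y) ^ 2) := by
    intro y
    have h1 : y = -(U y + (U y) ^ 3) := by linarith [hU y]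
    have h2 : |(-(U y + (U y) ^ 3))| = |U y| * (1 + (U y) ^ 2) := by
      rw [abs_neg]
      have h3 : U y + (U y) ^ 3 = U y * (1 + (U y) ^ 2) := by ring
      rw [h3, abs_mul, abs_of_pos (by positivity : (0:ℝ) < 1 + (U y) ^ 2)]
    rw [← h2]
    exact congrArg abs h1
  constructor
  · -- boundedness with C = 9
    refine ⟨9, fun y => ?_⟩
    set u := U y with hu
    have hp : (0 : ℝ) < 1 + 3 * u ^ 2 := by positivity
    rw [habsderiv y, ← hu, ← div_eq_mul_inv, div_le_iff₀ hp]
    have h1 : |y| ≤ (1 + u ^ 2) ^ ((3 : ℝ) / 2) := by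
      rw [habsy y, ← hu]
      have hub : |u| ≤ (1 + u ^ 2) ^ ((1 : ℝ) / 2) := by
        rw [← Real.sqrt_eq_rpow]
        rw [← Real.sqrt_sq_eq_abs]
        exact Real.sqrt_le_sqrt (by nlinarith)
      calc |u| * (1 + u ^ 2) ≤ (1 + u ^ 2) ^ ((1 : ℝ) / 2) * (1 + u ^ 2) :=
            mul_le_mul_of_nonneg_right hub (by positivity)
        _ = (1 + u ^ 2) ^ ((3 : ℝ) / 2) := by
            rw [show (3:ℝ)/2 = 1/2 + 1 by norm_num, Real.rpow_add (by positivity),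
              Real.rpow_one]
    have h2 : |y| ^ ((2 : ℝ) / 3) ≤ 1 + u ^ 2 := by
      calc |y| ^ ((2 : ℝ) / 3) ≤ ((1 + u ^ 2) ^ ((3 : ℝ) / 2)) ^ ((2 : ℝ) / 3) :=
            Real.rpow_le_rpow (abs_nonneg y) h1 (by norm_num)
        _ = (1 + u ^ 2) ^ ((3 : ℝ) / 2 * (2 / 3)) := by
            rw [← Real.rpow_mul (by positivity)]
        _ = 1 + u ^ 2 := by norm_num
    nlinarith [h2, sq_nonneg u]
  · -- the limit
    have hUtop : Tendsto U atBot atTop := by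
      have h1 : Tendsto (fun y : ℝ => e.symm (-y)) atBot atTop := by
        have hsm : Tendsto (e.symm : ℝ → ℝ) atTop atTop :=
          tendsto_atTop_atTop_of_monotone e.symm.monotone
            (fun b => ⟨e b, le_of_eq (e.symm_apply_apply b).symm⟩)
        exact hsm.comp tendsto_neg_atBot_atTop
      exact h1.congr fun y => (hUfun y).symm
    have hUbot : Tendsto U atTop atBot := by
      have h1 : Tendsto (fun y : ℝ => e.symm (-y)) atTop atBot := by
        have hsm : Tendsto (e.symm : ℝ → ℝ) atBot atBot :=
          tendsto_atBot_atBot_of_monotone e.symm.monotone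
            (fun b => ⟨e b, le_of_eq (e.symm_apply_apply b)⟩)
        exact hsm.comp tendsto_neg_atTop_atBot
      exact h1.congr fun y => (hUfun y).symm
    have habs : Tendsto (fun y => |U y|) (cocompact ℝ) atTop := by
      rw [cocompact_eq_atBot_atTop, tendsto_sup]
      constructor
      · exact tendsto_abs_atTop_atTop.comp hUtop
      · exact tendsto_abs_atBot_atTop.comp hUbot
    have hcomp := burgers_aux_Hlim.comp habs
    refine hcomp.congr fun y => ?_
    simp only [Function.comp]
    rw [habsderiv y, habsy y]
    rw [sq_abs]
end
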